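/- Let I ⊆ ℝ be an open interval, F : I → SU(2) a smooth map, and c, d : I → ℝ smooth functions with F(t)⁻¹ F′(t) = c(t) e₁ + d(t) e₃ for all t ∈ I. Define E_i(t) := F(t) e_i F(t)⁻¹ for i = 1, 2, 3. Then E₁′ = d·E₂, E₂′ = −d·E₁ + c·E₃, and E₃′ = −c·E₂ on I. Moreover, any C³ curve γ : I → su(2) with γ′ = E₁ is unit speed and satisfies |γ″(t)| = |d(t)| and ⟨[γ′(t), γ″(t)], γ‴(t)⟩ = c(t) · d(t)² for all t ∈ I; in particular, wherever d ≠ 0, the curve γ has curvature |d| and torsion c. -/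

import Mathlib

open Matrix

attribute [local instance] Matrix.normedAddCommGroup Matrix.normedSpace

noncomputable section

/-- The space of 2×2 complex matrices. -/
abbrev M2 : Type := Matrix (Fin 2) (Fin 2) ℂ

/-- Basis vector `e₁` of `su(2)`. -/
def e1 : M2 := (1 / 2 : ℂ) • !![0, Complex.I; Complex.I, 0]

/-- Basis vector `e₂` of `su(2)`. -/
def e2 : M2 := (1 / 2 : ℂ) • !![0, -1; 1, 0]

/-- Basis vector `e₃` of `su(2)`. -/
def e3 : M2 := (1 / 2 : ℂ) • !![Complex.I, 0; 0, -Complex.I]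

/-- The Lie bracket `[X, Y] = XY - YX`. -/
def br (X Y : M2) : M2 := X * Y - Y * X

/-- Partial derivative in the `x`-direction. -/
def pdx (g : ℝ × ℝ → M2) (p : ℝ × ℝ) : M2 := fderiv ℝ g p (1, 0)

/-- Partial derivative in the `y`-direction. -/
def pdy (g : ℝ × ℝ → M2) (p : ℝ × ℝ) : M2 := fderiv ℝ g p (0, 1)

/-- The inner product `⟨X, Y⟩ = −2 Re (tr (X Y))` on `su(2)`. -/
def ip (X Y : M2) : ℝ := -2 * (Matrix.trace (X * Y)).re

/- ### Auxiliary infrastructure -/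

def mulL : @ContinuousLinearMap ℝ ℝ _ _ (RingHom.id ℝ) M2 PseudoMetricSpace.toUniformSpace.toTopologicalSpace _
    (@ContinuousLinearMap ℝ ℝ _ _ (RingHom.id ℝ) M2 PseudoMetricSpace.toUniformSpace.toTopologicalSpace _
      M2 PseudoMetricSpace.toUniformSpace.toTopologicalSpace _ _ _) _ _ _ _ :=
  LinearMap.toContinuousLinearMap
    { toFun := fun X => LinearMap.toContinuousLinearMap (LinearMap.mul ℝ M2 X)
      map_add' := by intro x y; ext z; simp [add_mul]
      map_smul' := by intro r x; ext z; simp [smul_mul_assoc] }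

@[simp] lemma mulL_apply (X Y : M2) : mulL X Y = X * Y := rfl

lemma HasDerivAt.mmul {f g : ℝ → M2} {f' g' : M2} {t : ℝ}
    (hf : HasDerivAt f f' t) (hg : HasDerivAt g g' t) :
    HasDerivAt (fun s => f s * g s) (f' * g t + f t * g') t := by
  have h1 : HasDerivAt (fun s => mulL (f s)) (mulL f') t :=
    mulL.hasFDerivAt.comp_hasDerivAt t hf
  have h2 := h1.clm_apply hg
  simp only [mulL_apply] at h2
  exact h2

def starCL : M2 →L[ℝ] M2 :=
  LinearMap.toContinuousLinearMap ((starLinearEquiv ℝ (A := M2)).toLinearMap)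

lemma hasDerivAt_star {f : ℝ → M2} {f' : M2} {t : ℝ} (hf : HasDerivAt f f' t) :
    HasDerivAt (fun s => star (f s)) (star f') t := by
  have := starCL.hasFDerivAt.comp_hasDerivAt t hf
  exact this

/- ### Explicit matrix computations -/

lemma bra1 (x y : ℝ) : (x•e1 + y•e3)*e1 - e1*(x•e1+y•e3) = y • e2 := by
  ext i j; fin_cases i <;> fin_cases j <;>
    simp [e1,e2,e3, Matrix.mul_apply, Fin.sum_univ_two, Complex.ext_iff] <;> ring

lemma bra2 (x y : ℝ) : (x•e1 + y•e3)*e2 - e2*(x•e1+y•e3) = -(y • e1) + x • e3 := by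
  ext i j; fin_cases i <;> fin_cases j <;>
    simp [e1,e2,e3, Matrix.mul_apply, Fin.sum_univ_two, Complex.ext_iff] <;> ring

lemma bra3 (x y : ℝ) : (x•e1 + y•e3)*e3 - e3*(x•e1+y•e3) = -(x • e2) := by
  ext i j; fin_cases i <;> fin_cases j <;>
    simp [e1,e2,e3, Matrix.mul_apply, Fin.sum_univ_two, Complex.ext_iff] <;> ring

lemma brkt12 : e1*e2 - e2*e1 = e3 := by
  ext i j; fin_cases i <;> fin_cases j <;>
    simp [e1,e2,e3, Matrix.mul_apply, Fin.sum_univ_two, Complex.ext_iff] <;> ring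

lemma starA (x y : ℝ) : star (x • e1 + y • e3) = -(x • e1 + y • e3) := by
  ext i j; fin_cases i <;> fin_cases j <;>
    simp [e1, e3, Matrix.conjTranspose_apply, Complex.ext_iff]

lemma ip_e11 : ip e1 e1 = 1 := by
  simp [ip, e1, Matrix.trace_fin_two, Matrix.mul_apply, Fin.sum_univ_two]
  norm_num [Complex.ext_iff]

lemma ip_e22 : ip e2 e2 = 1 := by
  simp [ip, e2, Matrix.trace_fin_two, Matrix.mul_apply, Fin.sum_univ_two]
  norm_num [Complex.ext_iff]

lemma ip_e33 : ip e3 e3 = 1 := by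
  simp [ip, e3, Matrix.trace_fin_two, Matrix.mul_apply, Fin.sum_univ_two]
  norm_num [Complex.ext_iff]

lemma ip_e31 : ip e3 e1 = 0 := by
  simp [ip, e1, e3, Matrix.trace_fin_two, Matrix.mul_apply, Fin.sum_univ_two]

lemma ip_e32 : ip e3 e2 = 0 := by
  simp [ip, e2, e3, Matrix.trace_fin_two, Matrix.mul_apply, Fin.sum_univ_two]

/- ### Bilinearity of `ip` and `br` -/

lemma ip_smul_left (r : ℝ) (X Y : M2) : ip (r • X) Y = r * ip X Y := by
  simp [ip, smul_mul_assoc, Complex.real_smul, Complex.mul_re]; ring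

lemma ip_smul_right (r : ℝ) (X Y : M2) : ip X (r • Y) = r * ip X Y := by
  simp [ip, mul_smul_comm, Complex.real_smul, Complex.mul_re]; ring

lemma ip_add_right (X Y Z : M2) : ip X (Y + Z) = ip X Y + ip X Z := by
  simp [ip, mul_add]

lemma ip_neg_right (X Y : M2) : ip X (-Y) = -ip X Y := by
  simp [ip]

lemma conjMul (U X Y : M2) (h : star U * U = 1) :
    (U*X*star U) * (U*Y*star U) = U*(X*Y)*star U := by
  calc (U*X*star U) * (U*Y*star U) = U*(X*((star U*U)*(Y*star U))) := by noncomm_ring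
    _ = U*(X*Y)*star U := by rw [h, one_mul]; noncomm_ring

lemma ip_conj (U X Y : M2) (h : star U * U = 1) :
    ip (U*X*star U) (U*Y*star U) = ip X Y := by
  unfold ip
  rw [conjMul U X Y h, mul_assoc U, Matrix.trace_mul_comm U, mul_assoc, h, mul_one]

lemma br_conj (U X Y : M2) (h : star U * U = 1) :
    br (U*X*star U) (U*Y*star U) = U*(br X Y)*star U := by
  unfold br
  rw [conjMul U X Y h, conjMul U Y X h]
  noncomm_ring

lemma br_smul_right (r : ℝ) (X Y : M2) : br X (r • Y) = r • br X Y := by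
  simp [br, mul_smul_comm, smul_mul_assoc, smul_sub]

/- ### Key frame derivative lemma -/

lemma frameDeriv (F : ℝ → M2) (s : ℝ) (Fs' : M2) (hFd : HasDerivAt F Fs' s)
    (A e W : M2) (hA : Fs' = F s * A) (hstA : star A = -A)
    (hbr : A * e - e * A = W) (hU : F s * star (F s) = 1) :
    HasDerivAt (fun u => F u * e * star (F u)) (F s * W * star (F s)) s := by
  have h1 : HasDerivAt (fun u => F u * e) (Fs' * e) s := by
    simpa using hFd.mmul (hasDerivAt_const s e)
  have h2 := h1.mmul (hasDerivAt_star hFd)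
  have hstF' : star Fs' = -A * star (F s) := by
    rw [hA, StarMul.star_mul, hstA]
  convert h2 using 1
  rw [hstF', hA, ← hbr]
  noncomm_ring

/-- the Frenet–Serret computation for the frame `E_i = F e_i F⁻¹` of a
curve with `F⁻¹F′ = c e₁ + d e₃`: `E₁′ = d E₂`, `E₂′ = −d E₁ + c E₃`, `E₃′ = −c E₂`,
and any `C³` curve `γ` with `γ′ = E₁` is unit speed, has `|γ″| = |d|`,
`⟨[γ′, γ″], γ‴⟩ = c d²`; wherever `d ≠ 0` its torsion equals `c`. -/
theorem statement12 (a0 b0 : ℝ) (I : Set ℝ) (hI : I = Set.Ioo a0 b0)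
    (F : ℝ → M2) (hF : ContDiffOn ℝ (⊤ : ℕ∞) F I)
    (hFU : ∀ t ∈ I, F t ∈ Matrix.specialUnitaryGroup (Fin 2) ℂ)
    (c d : ℝ → ℝ) (hc : ContDiffOn ℝ (⊤ : ℕ∞) c I) (hd : ContDiffOn ℝ (⊤ : ℕ∞) d I)
    (hMC : ∀ t ∈ I, (F t)⁻¹ * deriv F t = c t • e1 + d t • e3)
    (E1 E2 E3 : ℝ → M2)
    (hE1 : E1 = fun t => F t * e1 * (F t)⁻¹)
    (hE2 : E2 = fun t => F t * e2 * (F t)⁻¹)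
    (hE3 : E3 = fun t => F t * e3 * (F t)⁻¹)
    (gamma : ℝ → M2) (hgamma : ContDiff ℝ 3 gamma)
    (hgamma' : ∀ t ∈ I, deriv gamma t = E1 t) :
    ∀ t ∈ I,
      deriv E1 t = d t • E2 t ∧
      deriv E2 t = -(d t • E1 t) + c t • E3 t ∧
      deriv E3 t = -(c t • E2 t) ∧
      ip (deriv gamma t) (deriv gamma t) = 1 ∧
      Real.sqrt (ip (deriv (deriv gamma) t) (deriv (deriv gamma) t)) = |d t| ∧
      ip (br (deriv gamma t) (deriv (deriv gamma) t)) (deriv (deriv (deriv gamma)) t)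
        = c t * d t ^ 2 ∧
      (d t ≠ 0 →
        ip (br (deriv gamma t) (deriv (deriv gamma) t)) (deriv (deriv (deriv gamma)) t)
          / ip (br (deriv gamma t) (deriv (deriv gamma) t))
              (br (deriv gamma t) (deriv (deriv gamma) t)) = c t) := by
  subst hI hE1 hE2 hE3
  have hIo : IsOpen (Set.Ioo a0 b0) := isOpen_Ioo
  have hsU : ∀ s ∈ Set.Ioo a0 b0, star (F s) * F s = 1 := by
    intro s hs
    exact (Matrix.mem_unitaryGroup_iff'.mp (Matrix.mem_specialUnitaryGroup_iff.mp (hFU s hs)).1)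
  have hUs : ∀ s ∈ Set.Ioo a0 b0, F s * star (F s) = 1 := fun s hs =>
    mul_eq_one_comm.mpr (hsU s hs)
  have hinv : ∀ s ∈ Set.Ioo a0 b0, (F s)⁻¹ = star (F s) := fun s hs =>
    Matrix.inv_eq_left_inv (hsU s hs)
  have hFd : ∀ s ∈ Set.Ioo a0 b0, HasDerivAt F (deriv F s) s := by
    intro s hs
    exact ((hF.contDiffAt (hIo.mem_nhds hs)).differentiableAt (by simp)).hasDerivAt
  have hF' : ∀ s ∈ Set.Ioo a0 b0, deriv F s = F s * (c s • e1 + d s • e3) := by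
    intro s hs
    have h := hMC s hs
    rw [hinv s hs] at h
    calc deriv F s = F s * star (F s) * deriv F s := by rw [hUs s hs, one_mul]
      _ = F s * (star (F s) * deriv F s) := mul_assoc _ _ _
      _ = F s * (c s • e1 + d s • e3) := by rw [h]
  have hD1 : ∀ s ∈ Set.Ioo a0 b0, HasDerivAt (fun u => F u * e1 * (F u)⁻¹)
      (d s • (F s * e2 * (F s)⁻¹)) s := by
    intro s hs
    have key := frameDeriv F s (deriv F s) (hFd s hs) _ e1 _ (hF' s hs)
      (starA (c s) (d s)) (bra1 (c s) (d s)) (hUs s hs)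
    have heq : (fun u => F u * e1 * (F u)⁻¹) =ᶠ[nhds s] (fun u => F u * e1 * star (F u)) := by
      filter_upwards [hIo.mem_nhds hs] with u hu
      rw [hinv u hu]
    have key2 := key.congr_of_eventuallyEq heq
    rw [hinv s hs]
    refine key2.congr_deriv ?_
    simp [mul_smul_comm, smul_mul_assoc]
  have hD2 : ∀ s ∈ Set.Ioo a0 b0, HasDerivAt (fun u => F u * e2 * (F u)⁻¹)
      (-(d s • (F s * e1 * (F s)⁻¹)) + c s • (F s * e3 * (F s)⁻¹)) s := by
    intro s hs
    have key := frameDeriv F s (deriv F s) (hFd s hs) _ e2 _ (hF' s hs)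
      (starA (c s) (d s)) (bra2 (c s) (d s)) (hUs s hs)
    have heq : (fun u => F u * e2 * (F u)⁻¹) =ᶠ[nhds s] (fun u => F u * e2 * star (F u)) := by
      filter_upwards [hIo.mem_nhds hs] with u hu
      rw [hinv u hu]
    have key2 := key.congr_of_eventuallyEq heq
    rw [hinv s hs]
    refine key2.congr_deriv ?_
    simp [mul_add, add_mul, mul_neg, neg_mul, mul_smul_comm, smul_mul_assoc]
  have hD3 : ∀ s ∈ Set.Ioo a0 b0, HasDerivAt (fun u => F u * e3 * (F u)⁻¹)
      (-(c s • (F s * e2 * (F s)⁻¹))) s := by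
    intro s hs
    have key := frameDeriv F s (deriv F s) (hFd s hs) _ e3 _ (hF' s hs)
      (starA (c s) (d s)) (bra3 (c s) (d s)) (hUs s hs)
    have heq : (fun u => F u * e3 * (F u)⁻¹) =ᶠ[nhds s] (fun u => F u * e3 * star (F u)) := by
      filter_upwards [hIo.mem_nhds hs] with u hu
      rw [hinv u hu]
    have key2 := key.congr_of_eventuallyEq heq
    rw [hinv s hs]
    refine key2.congr_deriv ?_
    simp [mul_neg, neg_mul, mul_smul_comm, smul_mul_assoc]
  intro t ht
  have hg1 : deriv gamma t = F t * e1 * (F t)⁻¹ := hgamma' t ht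
  have hg2 : ∀ s ∈ Set.Ioo a0 b0,
      deriv (deriv gamma) s = d s • (F s * e2 * (F s)⁻¹) := by
    intro s hs
    have heq : deriv gamma =ᶠ[nhds s] (fun u => F u * e1 * (F u)⁻¹) := by
      filter_upwards [hIo.mem_nhds hs] with u hu
      exact hgamma' u hu
    rw [show deriv (deriv gamma) s = deriv (fun u => F u * e1 * (F u)⁻¹) s from heq.deriv_eq]
    exact (hD1 s hs).deriv
  have hdd : HasDerivAt d (deriv d t) t :=
    ((hd.contDiffAt (hIo.mem_nhds ht)).differentiableAt (by simp)).hasDerivAt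
  have hg3 : deriv (deriv (deriv gamma)) t
      = d t • (-(d t • (F t * e1 * (F t)⁻¹)) + c t • (F t * e3 * (F t)⁻¹))
        + deriv d t • (F t * e2 * (F t)⁻¹) := by
    have heq : deriv (deriv gamma) =ᶠ[nhds t]
        (fun s => d s • (F s * e2 * (F s)⁻¹)) := by
      filter_upwards [hIo.mem_nhds ht] with u hu
      exact hg2 u hu
    rw [show deriv (deriv (deriv gamma)) t = deriv (fun s => d s • (F s * e2 * (F s)⁻¹)) t from
      heq.deriv_eq]
    exact (hdd.smul (hD2 t ht)).deriv
  have hUst := hsU t ht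
  -- rewrite everything in star form
  rw [hg1, hg2 t ht, hg3, hinv t ht] at *
  have hbrm : br (F t * e1 * star (F t)) (d t • (F t * e2 * star (F t)))
      = d t • (F t * e3 * star (F t)) := by
    rw [br_smul_right, br_conj _ _ _ hUst]
    unfold br
    rw [brkt12]
  have h4 : ip (F t * e1 * star (F t)) (F t * e1 * star (F t)) = 1 := by
    rw [ip_conj _ _ _ hUst, ip_e11]
  have h5 : ip (d t • (F t * e2 * star (F t))) (d t • (F t * e2 * star (F t))) = d t ^ 2 := by
    rw [ip_smul_left, ip_smul_right, ip_conj _ _ _ hUst, ip_e22]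
    ring
  have h6 : ip (br (F t * e1 * star (F t)) (d t • (F t * e2 * star (F t))))
      (d t • (-(d t • (F t * e1 * star (F t))) + c t • (F t * e3 * star (F t)))
        + deriv d t • (F t * e2 * star (F t))) = c t * d t ^ 2 := by
    rw [hbrm, ip_add_right, ip_smul_left, ip_smul_left, ip_smul_right, ip_smul_right,
      ip_add_right, ip_neg_right, ip_smul_right, ip_smul_right,
      ip_conj _ _ _ hUst, ip_conj _ _ _ hUst, ip_conj _ _ _ hUst,
      ip_e31, ip_e32, ip_e33]
    ring
  have h7 : ip (br (F t * e1 * star (F t)) (d t • (F t * e2 * star (F t))))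
      (br (F t * e1 * star (F t)) (d t • (F t * e2 * star (F t)))) = d t ^ 2 := by
    rw [hbrm, ip_smul_left, ip_smul_right, ip_conj _ _ _ hUst, ip_e33]
    ring
  refine ⟨(hD1 t ht).deriv, (hD2 t ht).deriv, (hD3 t ht).deriv, h4, ?_, h6, ?_⟩
  · rw [h5, Real.sqrt_sq_eq_abs]
  · intro hdne
    rw [h6, h7]
    exact mul_div_cancel_right₀ (c t) (pow_ne_zero 2 hdne)
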